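/- Let DMU_o = (x_o,y_o), o ∈ J, be FDH_V-efficient. If G-IRS prevails at DMU_o, then Right-IRS prevails at DMU_o, i.e., there exists δ > 1 with (δ·x_o, δ·y_o) in the interior of T. -/

import Mathlib

open Set

noncomputable section

/-- The FDH variable-returns-to-scale technology:
`T = {(x,y) : y ≥ 0 and ∃ j, x_j ≤ x and y ≤ y_j}`. -/
def FDH {n m s : ℕ} (x : Fin n → Fin m → ℝ) (y : Fin n → Fin s → ℝ) :
    Set ((Fin m → ℝ) × (Fin s → ℝ)) :=
  {p | (∀ r, 0 ≤ p.2 r) ∧ ∃ j : Fin n, (∀ i, x j i ≤ p.1 i) ∧ (∀ r, p.2 r ≤ y j r)}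

/-- DMU_o is FDH_V-efficient: no (x,y) ∈ T with x ≤ x_o, y ≥ y_o, (x,y) ≠ (x_o,y_o). -/
def FDHEfficient {n m s : ℕ} (x : Fin n → Fin m → ℝ) (y : Fin n → Fin s → ℝ)
    (o : Fin n) : Prop :=
  ¬ ∃ p ∈ FDH x y, (∀ i, p.1 i ≤ x o i) ∧ (∀ r, y o r ≤ p.2 r) ∧ p ≠ (x o, y o)

/-- `α_{jo} = max_i x_{ij} / x_{io}`. -/
def alphaRatio {n m s : ℕ} (x : Fin n → Fin m → ℝ) (_y : Fin n → Fin s → ℝ)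
    (o j : Fin n) : ℝ :=
  ⨆ i : Fin m, x j i / x o i

/-- `β_{jo} = min_r y_{rj} / y_{ro}`. -/
def betaRatio {n m s : ℕ} (_x : Fin n → Fin m → ℝ) (y : Fin n → Fin s → ℝ)
    (o j : Fin n) : ℝ :=
  ⨅ r : Fin s, y j r / y o r

/-- `θ_o(D) = inf {θ : ∃ j ∈ J, δ ∈ D, δ x_j ≤ θ x_o, δ y_j ≥ y_o}`. -/
def thetaEff {n m s : ℕ} (x : Fin n → Fin m → ℝ) (y : Fin n → Fin s → ℝ)
    (o : Fin n) (D : Set ℝ) : ℝ :=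
  sInf {θ : ℝ | ∃ j : Fin n, ∃ δ ∈ D,
    (∀ i, δ * x j i ≤ θ * x o i) ∧ (∀ r, y o r ≤ δ * y j r)}

/-- G-IRS prevails at DMU_o iff `θ_o^{ND} > θ_o^{C} = θ_o^{NI}`. -/
def GIRS {n m s : ℕ} (x : Fin n → Fin m → ℝ) (y : Fin n → Fin s → ℝ)
    (o : Fin n) : Prop :=
  thetaEff x y o (Ici 1) > thetaEff x y o (Ici 0) ∧
    thetaEff x y o (Ici 0) = thetaEff x y o (Icc 0 1)

/-- G-DRS prevails at DMU_o iff `θ_o^{NI} > θ_o^{C} = θ_o^{ND}`. -/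
def GDRS {n m s : ℕ} (x : Fin n → Fin m → ℝ) (y : Fin n → Fin s → ℝ)
    (o : Fin n) : Prop :=
  thetaEff x y o (Icc 0 1) > thetaEff x y o (Ici 0) ∧
    thetaEff x y o (Ici 0) = thetaEff x y o (Ici 1)

/-- G-CRS prevails at DMU_o iff `θ_o^{C} = θ_o^{NI} = θ_o^{ND} = 1`. -/
def GCRS {n m s : ℕ} (x : Fin n → Fin m → ℝ) (y : Fin n → Fin s → ℝ)
    (o : Fin n) : Prop :=
  thetaEff x y o (Ici 0) = 1 ∧ thetaEff x y o (Icc 0 1) = 1 ∧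
    thetaEff x y o (Ici 1) = 1

/-- G-SCRS prevails at DMU_o iff `θ_o^{C} = θ_o^{NI} = θ_o^{ND} < 1`. -/
def GSCRS {n m s : ℕ} (x : Fin n → Fin m → ℝ) (y : Fin n → Fin s → ℝ)
    (o : Fin n) : Prop :=
  thetaEff x y o (Ici 0) = thetaEff x y o (Icc 0 1) ∧
    thetaEff x y o (Icc 0 1) = thetaEff x y o (Ici 1) ∧
    thetaEff x y o (Ici 1) < 1

/-- Response function `β_o(α) = sup {β : (α x_o, β y_o) ∈ T}`. -/
def respFun {n m s : ℕ} (x : Fin n → Fin m → ℝ) (y : Fin n → Fin s → ℝ)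
    (o : Fin n) (α : ℝ) : ℝ :=
  sSup {β : ℝ | ((fun i => α * x o i), (fun r => β * y o r)) ∈ FDH x y}

/-- Maximum incremental ratio `σ_o^+ = sup_{α > 1} (β_o(α) - 1)/(α - 1)`. -/
def sigmaPlus {n m s : ℕ} (x : Fin n → Fin m → ℝ) (y : Fin n → Fin s → ℝ)
    (o : Fin n) : ℝ :=
  sSup {ρ : ℝ | ∃ α : ℝ, 1 < α ∧ ρ = (respFun x y o α - 1) / (α - 1)}

/-- Minimum decremental ratio `σ_o^- = inf {(β_o(α)-1)/(α-1) : α < 1 feasible}`,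
taken in the extended reals (so it is `+∞` when no `α < 1` is feasible). -/
def sigmaMinus {n m s : ℕ} (x : Fin n → Fin m → ℝ) (y : Fin n → Fin s → ℝ)
    (o : Fin n) : EReal :=
  sInf {ρ : EReal | ∃ α : ℝ, α < 1 ∧
    (∃ β : ℝ, ((fun i => α * x o i), (fun r => β * y o r)) ∈ FDH x y) ∧
    ρ = (((respFun x y o α - 1) / (α - 1) : ℝ) : EReal)}

/-- Right-IRS: `(δ x_o, δ y_o) ∈ int T` for some `δ > 1`. -/
def RightIRS {n m s : ℕ} (x : Fin n → Fin m → ℝ) (y : Fin n → Fin s → ℝ)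
    (o : Fin n) : Prop :=
  ∃ δ : ℝ, 1 < δ ∧
    ((fun i => δ * x o i), (fun r => δ * y o r)) ∈ interior (FDH x y)

/-- Right-DRS: `(δ x_o, δ y_o) ∉ T` for every `δ > 1`. -/
def RightDRS {n m s : ℕ} (x : Fin n → Fin m → ℝ) (y : Fin n → Fin s → ℝ)
    (o : Fin n) : Prop :=
  ∀ δ : ℝ, 1 < δ →
    ((fun i => δ * x o i), (fun r => δ * y o r)) ∉ FDH x y

/-- Right-CRS: neither Right-IRS nor Right-DRS. -/
def RightCRS {n m s : ℕ} (x : Fin n → Fin m → ℝ) (y : Fin n → Fin s → ℝ)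
    (o : Fin n) : Prop :=
  ¬ RightIRS x y o ∧ ¬ RightDRS x y o

/-- Left-IRS: `(δ x_o, δ y_o) ∉ T` for every `δ ∈ (0,1)`. -/
def LeftIRS {n m s : ℕ} (x : Fin n → Fin m → ℝ) (y : Fin n → Fin s → ℝ)
    (o : Fin n) : Prop :=
  ∀ δ : ℝ, 0 < δ → δ < 1 →
    ((fun i => δ * x o i), (fun r => δ * y o r)) ∉ FDH x y

/-- Left-DRS: `(δ x_o, δ y_o) ∈ int T` for some `δ ∈ (0,1)`. -/
def LeftDRS {n m s : ℕ} (x : Fin n → Fin m → ℝ) (y : Fin n → Fin s → ℝ)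
    (o : Fin n) : Prop :=
  ∃ δ : ℝ, 0 < δ ∧ δ < 1 ∧
    ((fun i => δ * x o i), (fun r => δ * y o r)) ∈ interior (FDH x y)

/-- Left-CRS: neither Left-IRS nor Left-DRS. -/
def LeftCRS {n m s : ℕ} (x : Fin n → Fin m → ℝ) (y : Fin n → Fin s → ℝ)
    (o : Fin n) : Prop :=
  ¬ LeftIRS x y o ∧ ¬ LeftDRS x y o

/-! GIRS forces `θ_o^{NI} < θ_o^{ND} ≤ 1`, so some DMU_j scaled down by `δ ∈ (0,1]` produces at
least `y_o` from at most `θ x_o` with `θ < 1`. Efficiency rules out `δ = 1`. For `δ < 1`, any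
`t > 1` with `θ < tδ < 1` puts `(t x_o, t y_o)` strictly inside the orthant
`{x > x_j, 0 < y < y_j}`, an open subset of `T`. -/

section

variable {n m s : ℕ} {x : Fin n → Fin m → ℝ} {y : Fin n → Fin s → ℝ} {o : Fin n}

theorem thetaEff_le_one (hm : 0 < m) (hx : ∀ j i, 0 < x j i) {D : Set ℝ}
    (hD : D ⊆ Ici 0) (h1 : 1 ∈ D) : thetaEff x y o D ≤ 1 := by
  refine csInf_le ⟨0, ?_⟩ ⟨o, 1, h1, fun i => by rw [one_mul], fun r => by rw [one_mul]⟩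
  rintro θ ⟨j, δ, hδ, hxj, -⟩
  have hδ0 : 0 ≤ δ := hD hδ
  exact nonneg_of_mul_nonneg_left ((mul_nonneg hδ0 (hx j ⟨0, hm⟩).le).trans (hxj ⟨0, hm⟩))
    (hx o ⟨0, hm⟩)

theorem exists_of_thetaEff_lt {D : Set ℝ} (h1 : 1 ∈ D) {c : ℝ} (h : thetaEff x y o D < c) :
    ∃ θ < c, ∃ j, ∃ δ ∈ D, (∀ i, δ * x j i ≤ θ * x o i) ∧ (∀ r, y o r ≤ δ * y j r) := by
  obtain ⟨θ, hθ, hθc⟩ := exists_lt_of_csInf_lt (by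
    exact ⟨1, o, 1, h1, fun i => by rw [one_mul], fun r => by rw [one_mul]⟩) h
  exact ⟨θ, hθc, hθ⟩

theorem FDHEfficient.eq_of_le (heff : FDHEfficient x y o) (hy : ∀ r, 0 ≤ y o r) {j : Fin n}
    (hxj : ∀ i, x j i ≤ x o i) (hyj : ∀ r, y o r ≤ y j r) : x j = x o := by
  by_contra hne
  exact heff ⟨(x j, y o), ⟨hy, j, fun _ => le_rfl, hyj⟩, hxj, fun _ => le_rfl,
    fun h => hne (congrArg Prod.fst h)⟩

theorem mem_interior_FDH (j : Fin n) {p : (Fin m → ℝ) × (Fin s → ℝ)}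
    (hx : ∀ i, x j i < p.1 i) (hy0 : ∀ r, 0 < p.2 r) (hy : ∀ r, p.2 r < y j r) :
    p ∈ interior (FDH x y) := by
  let U : Set ((Fin m → ℝ) × (Fin s → ℝ)) :=
    (⋂ i, {q | x j i < q.1 i}) ∩ ⋂ r, ({q | 0 < q.2 r} ∩ {q | q.2 r < y j r})
  have hU : IsOpen U := by
    refine (isOpen_iInter_of_finite fun i => isOpen_lt continuous_const (by fun_prop)).inter
      (isOpen_iInter_of_finite fun r => ?_)
    exact (isOpen_lt continuous_const (by fun_prop)).inter (isOpen_lt (by fun_prop) continuous_const)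
  have hUT : U ⊆ FDH x y := fun q hq => by
    simp only [U, mem_inter_iff, mem_iInter, mem_ofPred_eq] at hq
    exact ⟨fun r => (hq.2 r).1.le, j, fun i => (hq.1 i).le, fun r => (hq.2 r).2.le⟩
  refine interior_maximal hUT hU ?_
  simp only [U, mem_inter_iff, mem_iInter, mem_ofPred_eq]
  exact ⟨hx, fun r => ⟨hy0 r, hy r⟩⟩

theorem exists_one_lt_theta_lt_mul_lt_one {θ δ : ℝ} (hθ : θ < 1) (hδ0 : 0 < δ) (hδ1 : δ < 1) :
    ∃ t, 1 < t ∧ θ < t * δ ∧ t * δ < 1 := by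
  obtain ⟨u, hu, hu1⟩ := exists_between (max_lt hθ hδ1)
  refine ⟨u / δ, ?_, ?_, ?_⟩
  · rw [one_lt_div hδ0]; exact (le_max_right θ δ).trans_lt hu
  · rw [div_mul_cancel₀ u hδ0.ne']; exact (le_max_left θ δ).trans_lt hu
  · rwa [div_mul_cancel₀ u hδ0.ne']

theorem rightIRS_of_scaled_dominance (hx : ∀ j i, 0 < x j i) (hy : ∀ j r, 0 < y j r)
    {θ δ : ℝ} (hθ : θ < 1) (hδ0 : 0 < δ) (hδ1 : δ < 1) {j : Fin n}
    (hxj : ∀ i, δ * x j i ≤ θ * x o i) (hyj : ∀ r, y o r ≤ δ * y j r) : RightIRS x y o := by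
  obtain ⟨t, ht1, hθt, ht⟩ := exists_one_lt_theta_lt_mul_lt_one hθ hδ0 hδ1
  refine ⟨t, ht1, mem_interior_FDH j (fun i => ?_)
    (fun r => mul_pos (zero_lt_one.trans ht1) (hy o r)) (fun r => ?_)⟩
  · have : δ * x j i < δ * (t * x o i) :=
      calc δ * x j i ≤ θ * x o i := hxj i
        _ < t * δ * x o i := mul_lt_mul_of_pos_right hθt (hx o i)
        _ = δ * (t * x o i) := by ring
    exact lt_of_mul_lt_mul_left this hδ0.le
  · have : δ * (t * y o r) < δ * y j r :=
      calc δ * (t * y o r) = t * δ * y o r := by ring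
        _ < y o r := mul_lt_of_lt_one_left (hy o r) ht
        _ ≤ δ * y j r := hyj r
    exact lt_of_mul_lt_mul_left this hδ0.le

end

/-- if G-IRS prevails at the FDH_V-efficient DMU_o, then Right-IRS
prevails at it: there is `δ > 1` with `(δ x_o, δ y_o) ∈ int T`. -/
theorem stmt16 {n m s : ℕ} (hm : 0 < m) (hs : 0 < s)
    (x : Fin n → Fin m → ℝ) (y : Fin n → Fin s → ℝ)
    (hx : ∀ j i, 0 < x j i) (hy : ∀ j r, 0 < y j r)
    (o : Fin n) (heff : FDHEfficient x y o) (hgirs : GIRS x y o) :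
    ∃ δ : ℝ, 1 < δ ∧
      ((fun i => δ * x o i), (fun r => δ * y o r)) ∈ interior (FDH x y) := by
  obtain ⟨hC, hCNI⟩ := hgirs
  have hND : thetaEff x y o (Ici 1) ≤ 1 :=
    thetaEff_le_one hm hx (Ici_subset_Ici.mpr zero_le_one) self_mem_Ici
  have hNI : thetaEff x y o (Icc 0 1) < 1 := hCNI ▸ hC.trans_le hND
  obtain ⟨θ, hθ, j, δ, ⟨hδ0, hδ1⟩, hxj, hyj⟩ :=
    exists_of_thetaEff_lt (right_mem_Icc.mpr zero_le_one) hNI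
  have hδpos : 0 < δ :=
    pos_of_mul_pos_left ((hy o ⟨0, hs⟩).trans_le (hyj ⟨0, hs⟩)) (hy j ⟨0, hs⟩).le
  rcases hδ1.lt_or_eq with hδ1 | rfl
  · exact rightIRS_of_scaled_dominance hx hy hθ hδpos hδ1 hxj hyj
  · simp only [one_mul] at hxj hyj
    have hjo : x j = x o := heff.eq_of_le (fun r => (hy o r).le)
      (fun i => (hxj i).trans (mul_le_of_le_one_left (hx o i).le hθ.le)) hyj
    have hself : x o ⟨0, hm⟩ ≤ θ * x o ⟨0, hm⟩ := hjo ▸ hxj ⟨0, hm⟩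
    exact absurd hself (mul_lt_of_lt_one_left (hx o _) hθ).not_ge
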